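/- arXiv:1208.1172 — 3 statements merged into one kernel-verified Lean document; each statement's English description precedes it below -/
import Mathlib

section
/- Let J be a positive integer and let Ω and Δ be nonempty subsets of ℝ^J with Ω ⊆ Δ. Let Pr : Ω → ℝ be a nonnegative, uniformly continuous function, and let P : Δ → Ω be a nonexpansive operator that is boundedly convergent: for every x ∈ Ω the sequence (P^k x)_{k=0}^∞ converges to a point y(x) ∈ Ω, and there exists γ ≥ 0 such that Pr(y(x)) ≤ γ for every x ∈ Ω. Then P is strongly perturbation resilient, i.e.: (a) there exists ε ≥ 0 such that for every x ∈ Ω there is a nonnegative integer K with Pr(P^K x) ≤ ε; and (b) for every ε ≥ 0 with the property that for every x ∈ Ω there exists a nonnegative integer K with Pr(P^K x) ≤ ε, for every ε' > ε, and for every sequence (x^k)_{k=0}^∞ of points of Ω satisfying x^{k+1} = P(x^k + β_k v^k) for all k ≥ 0, where the β_k are nonnegative reals with Σ_{k=0}^∞ β_k < ∞, the sequence (v^k)_{k=0}^∞ in ℝ^J is bounded, and x^k + β_k v^k ∈ Δ for all k, there exists a nonnegative integer K with Pr(x^K) ≤ ε'. -/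
/-!
Part (a): along an orbit `P^k x → y(x)` the values of the continuous `Pr` approach
`Pr (y x) ≤ γ`, so `ε = γ + 1` is reached after finitely many steps.

Part (b): by nonexpansiveness, the perturbed sequence started at `x^n` stays within
`∑_{j ≥ n} β_j ‖v^j‖` of the unperturbed orbit `P^m x^n`; for `n` large this tail is below
the modulus `δ` of uniform continuity for `ε' - ε`, and the orbit of `x^n` reaches the
`ε`-compatible level.
-/

open Filter Topology Set Finset

lemma ContinuousOn.exists_apply_le_of_tendsto {X : Type*} [TopologicalSpace X] {f : X → ℝ}
    {S : Set X} (hf : ContinuousOn f S) {u : ℕ → X} {a : X} (hu : ∀ k, u k ∈ S) (ha : a ∈ S)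
    (hlim : Tendsto u atTop (𝓝 a)) {e : ℝ} (he : f a < e) : ∃ K, f (u K) ≤ e := by
  have hlim' : Tendsto u atTop (𝓝[S] a) :=
    tendsto_nhdsWithin_iff.2 ⟨hlim, .of_forall hu⟩
  obtain ⟨K, hK⟩ := ((hf a ha).tendsto.comp hlim' |>.eventually (gt_mem_nhds he)).exists
  exact ⟨K, hK.le⟩

lemma Summable.exists_forall_norm_sum_range_add_lt {E : Type*} [SeminormedAddCommGroup E]
    {f : ℕ → E} (hf : Summable f) {δ : ℝ} (hδ : 0 < δ) :
    ∃ n, ∀ m, ‖∑ j ∈ range m, f (n + j)‖ < δ := by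
  obtain ⟨n, hn⟩ := Metric.cauchySeq_iff'.1 hf.tendsto_sum_tsum_nat.cauchySeq δ hδ
  refine ⟨n, fun m => ?_⟩
  simpa [dist_eq_norm, sum_range_add] using hn (n + m) (Nat.le_add_right n m)

section Perturbation

variable {E : Type*} [SeminormedAddCommGroup E] {Δ : Set E} {P : E → E}

lemma norm_sub_iterate_le_sum_norm (hP : ∀ a ∈ Δ, ∀ b ∈ Δ, ‖P a - P b‖ ≤ ‖a - b‖)
    (hPΔ : MapsTo P Δ Δ) {x w : ℕ → E} (hx₀ : x 0 ∈ Δ) (hxw : ∀ k, x k + w k ∈ Δ)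
    (hrec : ∀ k, x (k + 1) = P (x k + w k)) (m : ℕ) :
    ‖x m - P^[m] (x 0)‖ ≤ ∑ j ∈ range m, ‖w j‖ := by
  induction m with
  | zero => simp
  | succ m ih =>
    rw [hrec, Function.iterate_succ_apply', sum_range_succ]
    calc ‖P (x m + w m) - P (P^[m] (x 0))‖
        ≤ ‖x m + w m - P^[m] (x 0)‖ := hP _ (hxw m) _ (hPΔ.iterate m hx₀)
      _ = ‖(x m - P^[m] (x 0)) + w m‖ := by rw [add_sub_right_comm]
      _ ≤ ‖x m - P^[m] (x 0)‖ + ‖w m‖ := norm_add_le _ _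
      _ ≤ ∑ j ∈ range m, ‖w j‖ + ‖w m‖ := by gcongr

lemma exists_le_of_summable_perturbation {Ω : Set E} (hΩΔ : Ω ⊆ Δ) (hP_map : ∀ x ∈ Δ, P x ∈ Ω)
    (hP : ∀ a ∈ Δ, ∀ b ∈ Δ, ‖P a - P b‖ ≤ ‖a - b‖) {Pr : E → ℝ} (hPr : UniformContinuousOn Pr Ω)
    {ε ε' : ℝ} (hε : ∀ x ∈ Ω, ∃ K, Pr (P^[K] x) ≤ ε) (hε' : ε < ε') {x w : ℕ → E}
    (hxΩ : ∀ k, x k ∈ Ω) (hw : Summable fun k => ‖w k‖) (hxw : ∀ k, x k + w k ∈ Δ)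
    (hrec : ∀ k, x (k + 1) = P (x k + w k)) : ∃ K, Pr (x K) ≤ ε' := by
  have hPΩ : MapsTo P Ω Ω := fun a ha => hP_map a (hΩΔ ha)
  obtain ⟨δ, hδ, hPrδ⟩ := Metric.uniformContinuousOn_iff_le.1 hPr (ε' - ε) (sub_pos.2 hε')
  obtain ⟨n, hn⟩ := hw.exists_forall_norm_sum_range_add_lt hδ
  obtain ⟨K, hK⟩ := hε (x n) (hxΩ n)
  have hclose : ‖x (n + K) - P^[K] (x n)‖ ≤ δ :=
    calc ‖x (n + K) - P^[K] (x n)‖ ≤ ∑ j ∈ range K, ‖w (n + j)‖ :=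
          norm_sub_iterate_le_sum_norm (x := fun k => x (n + k)) hP
            (fun a ha => hΩΔ (hP_map a ha)) (hΩΔ (hxΩ n)) (fun k => hxw (n + k))
            (fun k => hrec (n + k)) K
      _ ≤ δ := (Real.le_norm_self _).trans (hn K).le
  have hPr_close := hPrδ _ (hxΩ (n + K)) _ (hPΩ.iterate K (hxΩ n)) (by rwa [dist_eq_norm])
  rw [Real.dist_eq] at hPr_close
  exact ⟨n + K, by linarith [(abs_le.1 hPr_close).2]⟩

end Perturbation

theorem stmt_0_general (J : ℕ)
    (Ω Δ : Set (EuclideanSpace ℝ (Fin J)))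
    (hΩΔ : Ω ⊆ Δ)
    (Pr : EuclideanSpace ℝ (Fin J) → ℝ)
    (hPr_uc : ∀ ε > (0 : ℝ), ∃ δ > (0 : ℝ), ∀ x ∈ Ω, ∀ y ∈ Ω,
      ‖x - y‖ ≤ δ → |Pr x - Pr y| ≤ ε)
    (P : EuclideanSpace ℝ (Fin J) → EuclideanSpace ℝ (Fin J))
    (hP_map : ∀ x ∈ Δ, P x ∈ Ω)
    (hP_nonexp : ∀ x ∈ Δ, ∀ y ∈ Δ, ‖P x - P y‖ ≤ ‖x - y‖)
    (y : EuclideanSpace ℝ (Fin J) → EuclideanSpace ℝ (Fin J))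
    (hy : ∀ x ∈ Ω, y x ∈ Ω ∧ Tendsto (fun k => P^[k] x) atTop (𝓝 (y x)))
    (γ : ℝ) (hγ : 0 ≤ γ) (hyγ : ∀ x ∈ Ω, Pr (y x) ≤ γ) :
    (∃ ε ≥ (0 : ℝ), ∀ x ∈ Ω, ∃ K : ℕ, Pr (P^[K] x) ≤ ε) ∧
    (∀ ε ≥ (0 : ℝ), (∀ x ∈ Ω, ∃ K : ℕ, Pr (P^[K] x) ≤ ε) →
      ∀ ε' > ε, ∀ (x : ℕ → EuclideanSpace ℝ (Fin J)) (β : ℕ → ℝ)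
        (v : ℕ → EuclideanSpace ℝ (Fin J)),
        (∀ k, x k ∈ Ω) → (∀ k, 0 ≤ β k) → Summable β →
        (∃ M : ℝ, ∀ k, ‖v k‖ ≤ M) →
        (∀ k, x k + β k • v k ∈ Δ) →
        (∀ k, x (k + 1) = P (x k + β k • v k)) →
        ∃ K : ℕ, Pr (x K) ≤ ε') := by
  have hPr : UniformContinuousOn Pr Ω :=
    Metric.uniformContinuousOn_iff_le.2 (by simpa only [dist_eq_norm, Real.norm_eq_abs] using hPr_uc)
  have hPΩ : MapsTo P Ω Ω := fun a ha => hP_map a (hΩΔ ha)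
  refine ⟨⟨γ + 1, by linarith, fun x hx => ?_⟩, ?_⟩
  · obtain ⟨hyx, hlim⟩ := hy x hx
    exact hPr.continuousOn.exists_apply_le_of_tendsto (fun k => hPΩ.iterate k hx) hyx hlim
      (by linarith [hyγ x hx])
  · rintro ε - hε ε' hε' x β v hxΩ hβ hβsum ⟨M, hM⟩ hxΔ hrec
    have hw : Summable fun k => ‖β k • v k‖ := by
      refine .of_nonneg_of_le (fun _ => norm_nonneg _) (fun k => ?_) (hβsum.mul_right M)
      rw [norm_smul, Real.norm_of_nonneg (hβ k)]
      exact mul_le_mul_of_nonneg_left (hM k) (hβ k)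
    exact exists_le_of_summable_perturbation hΩΔ hP_map hP_nonexp hPr hε hε' hxΩ hw hxΔ hrec

/-- Theorem 1 of the paper: sufficient conditions for strong perturbation resilience. -/
theorem stmt_0 (J : ℕ) (hJ : 0 < J)
    (Ω Δ : Set (EuclideanSpace ℝ (Fin J)))
    (hΩ : Ω.Nonempty) (hΔ : Δ.Nonempty) (hΩΔ : Ω ⊆ Δ)
    (Pr : EuclideanSpace ℝ (Fin J) → ℝ)
    (hPr_nonneg : ∀ x ∈ Ω, 0 ≤ Pr x)
    (hPr_uc : ∀ ε > (0 : ℝ), ∃ δ > (0 : ℝ), ∀ x ∈ Ω, ∀ y ∈ Ω,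
      ‖x - y‖ ≤ δ → |Pr x - Pr y| ≤ ε)
    (P : EuclideanSpace ℝ (Fin J) → EuclideanSpace ℝ (Fin J))
    (hP_map : ∀ x ∈ Δ, P x ∈ Ω)
    (hP_nonexp : ∀ x ∈ Δ, ∀ y ∈ Δ, ‖P x - P y‖ ≤ ‖x - y‖)
    (y : EuclideanSpace ℝ (Fin J) → EuclideanSpace ℝ (Fin J))
    (hy : ∀ x ∈ Ω, y x ∈ Ω ∧ Tendsto (fun k => P^[k] x) atTop (𝓝 (y x)))
    (γ : ℝ) (hγ : 0 ≤ γ) (hyγ : ∀ x ∈ Ω, Pr (y x) ≤ γ) :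
    (∃ ε ≥ (0 : ℝ), ∀ x ∈ Ω, ∃ K : ℕ, Pr (P^[K] x) ≤ ε) ∧
    (∀ ε ≥ (0 : ℝ), (∀ x ∈ Ω, ∃ K : ℕ, Pr (P^[K] x) ≤ ε) →
      ∀ ε' > ε, ∀ (x : ℕ → EuclideanSpace ℝ (Fin J)) (β : ℕ → ℝ)
        (v : ℕ → EuclideanSpace ℝ (Fin J)),
        (∀ k, x k ∈ Ω) → (∀ k, 0 ≤ β k) → Summable β →
        (∃ M : ℝ, ∀ k, ‖v k‖ ≤ M) →
        (∀ k, x k + β k • v k ∈ Δ) →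
        (∀ k, x (k + 1) = P (x k + β k • v k)) →
        ∃ K : ℕ, Pr (x K) ≤ ε') :=
  stmt_0_general J Ω Δ hΩΔ Pr hPr_uc P hP_map hP_nonexp y hy γ hγ hyγ
end

section
/- Let J be a positive integer and let Ω and Δ be nonempty subsets of ℝ^J with Ω ⊆ Δ. Let Pr : Ω → ℝ be a uniformly continuous function and let P : Δ → Ω be a nonexpansive operator. Suppose ε ≥ 0 is such that for every x ∈ Ω there exists a nonnegative integer k with Pr(P^k x) ≤ ε. Then for every ε' > ε and every sequence (x^k)_{k=0}^∞ of points of Ω satisfying x^{k+1} = P(x^k + β_k v^k) for all k ≥ 0, where the β_k are nonnegative reals with Σ_{k=0}^∞ β_k < ∞, the sequence (v^k)_{k=0}^∞ in ℝ^J is bounded, and x^k + β_k v^k ∈ Δ for all k, there exists a nonnegative integer K with Pr(x^K) ≤ ε'. -/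
/-!
Fix `ε' > ε` and let `δ` be a modulus of uniform continuity of `Pr` for `ε' - ε`. Since `P` is
nonexpansive, after `k` further steps the perturbed sequence started at `x N` stays within
`∑_{N ≤ j < N + k} β_j ‖v_j‖` of the unperturbed orbit `P^k (x N)`; as the perturbations are
summable, choosing `N` with small tail keeps this distance below `δ` for every `k`. Taking `k` with
`Pr (P^k (x N)) ≤ ε` then gives `Pr (x (N + k)) ≤ ε'`.
-/

open Finset

theorem norm_sub_iterate_le_sum_norm_s4 {E : Type*} [SeminormedAddCommGroup E] {Δ : Set E}
    {P : E → E} (hP_maps : Set.MapsTo P Δ Δ)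
    (hP_nonexp : ∀ x ∈ Δ, ∀ y ∈ Δ, ‖P x - P y‖ ≤ ‖x - y‖)
    {x e : ℕ → E} (hxe : ∀ k, x k + e k ∈ Δ) (hrec : ∀ k, x (k + 1) = P (x k + e k))
    {n : ℕ} (hn : x n ∈ Δ) (k : ℕ) :
    ‖x (n + k) - P^[k] (x n)‖ ≤ ∑ j ∈ range k, ‖e (n + j)‖ := by
  induction k with
  | zero => simp
  | succ k ih =>
    calc ‖x (n + (k + 1)) - P^[k + 1] (x n)‖
        = ‖P (x (n + k) + e (n + k)) - P (P^[k] (x n))‖ := by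
          rw [← add_assoc, hrec, Function.iterate_succ_apply']
      _ ≤ ‖(x (n + k) - P^[k] (x n)) + e (n + k)‖ := by
          rw [sub_add_eq_add_sub]
          exact hP_nonexp _ (hxe _) _ (hP_maps.iterate k hn)
      _ ≤ ‖x (n + k) - P^[k] (x n)‖ + ‖e (n + k)‖ := norm_add_le _ _
      _ ≤ ∑ j ∈ range (k + 1), ‖e (n + j)‖ := by
          rw [sum_range_succ]
          exact add_le_add ih le_rfl

theorem Summable.exists_forall_sum_range_add_le {f : ℕ → ℝ} (hf : Summable f) (hf_nonneg : 0 ≤ f)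
    {δ : ℝ} (hδ : 0 < δ) : ∃ N, ∀ k, ∑ j ∈ range k, f (N + j) ≤ δ := by
  obtain ⟨N, hN⟩ := ((tendsto_sum_nat_add f).eventually (gt_mem_nhds hδ)).exists
  refine ⟨N, fun k => ?_⟩
  have hsum : Summable fun j => f (j + N) := (summable_nat_add_iff N).2 hf
  calc ∑ j ∈ range k, f (N + j) = ∑ j ∈ range k, f (j + N) := by simp only [add_comm N]
    _ ≤ ∑' j, f (j + N) := hsum.sum_le_tsum _ fun j _ => hf_nonneg _
    _ ≤ δ := hN.le

theorem summable_norm_smul_of_bounded {E : Type*} [SeminormedAddCommGroup E] [NormedSpace ℝ E]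
    {β : ℕ → ℝ} {v : ℕ → E} (hβ : Summable β) (hβ_nonneg : ∀ k, 0 ≤ β k)
    (hv : ∃ M, ∀ k, ‖v k‖ ≤ M) : Summable fun k => ‖β k • v k‖ := by
  obtain ⟨M, hM⟩ := hv
  refine (hβ.mul_right M).of_nonneg_of_le (fun _ => norm_nonneg _) fun k => ?_
  rw [norm_smul, Real.norm_of_nonneg (hβ_nonneg k)]
  exact mul_le_mul_of_nonneg_left (hM k) (hβ_nonneg k)

theorem stmt_4_general (J : ℕ)
    (Ω Δ : Set (EuclideanSpace ℝ (Fin J)))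
    (hΩΔ : Ω ⊆ Δ)
    (Pr : EuclideanSpace ℝ (Fin J) → ℝ)
    (hPr_uc : ∀ ε > (0 : ℝ), ∃ δ > (0 : ℝ), ∀ x ∈ Ω, ∀ y ∈ Ω,
      ‖x - y‖ ≤ δ → |Pr x - Pr y| ≤ ε)
    (P : EuclideanSpace ℝ (Fin J) → EuclideanSpace ℝ (Fin J))
    (hP_map : ∀ x ∈ Δ, P x ∈ Ω)
    (hP_nonexp : ∀ x ∈ Δ, ∀ y ∈ Δ, ‖P x - P y‖ ≤ ‖x - y‖)
    (ε : ℝ)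
    (hreach : ∀ x ∈ Ω, ∃ k : ℕ, Pr (P^[k] x) ≤ ε) :
    ∀ ε' > ε, ∀ (x : ℕ → EuclideanSpace ℝ (Fin J)) (β : ℕ → ℝ)
      (v : ℕ → EuclideanSpace ℝ (Fin J)),
      (∀ k, x k ∈ Ω) → (∀ k, 0 ≤ β k) → Summable β →
      (∃ M : ℝ, ∀ k, ‖v k‖ ≤ M) →
      (∀ k, x k + β k • v k ∈ Δ) →
      (∀ k, x (k + 1) = P (x k + β k • v k)) →
      ∃ K : ℕ, Pr (x K) ≤ ε' := by
  intro ε' hε' x β v hxΩ hβ_nonneg hβ hv hxΔ hrec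
  have hP_Ω : Set.MapsTo P Ω Ω := fun y hy => hP_map y (hΩΔ hy)
  have hP_Δ : Set.MapsTo P Δ Δ := fun y hy => hΩΔ (hP_map y hy)
  obtain ⟨δ, hδ, hPr_δ⟩ := hPr_uc (ε' - ε) (sub_pos.2 hε')
  obtain ⟨N, hN⟩ := (summable_norm_smul_of_bounded hβ hβ_nonneg hv).exists_forall_sum_range_add_le
    (fun _ => norm_nonneg _) hδ
  obtain ⟨k, hk⟩ := hreach (x N) (hxΩ N)
  have hclose : ‖x (N + k) - P^[k] (x N)‖ ≤ δ :=
    (norm_sub_iterate_le_sum_norm_s4 hP_Δ hP_nonexp hxΔ hrec (hΩΔ (hxΩ N)) k).trans (hN k)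
  have hPr_close := hPr_δ _ (hxΩ _) _ (hP_Ω.iterate k (hxΩ N)) hclose
  exact ⟨N + k, by linarith [(abs_le.1 hPr_close).2]⟩

/-- Second part of the proof of Theorem 1 (inequality (16)): for a nonexpansive
algorithmic operator and uniformly continuous proximity function, if every
unperturbed iteration sequence reaches `ε`-compatibility, then every boundedly
perturbed sequence reaches `ε'`-compatibility for each `ε' > ε`. -/
theorem stmt_4 (J : ℕ) (hJ : 0 < J)
    (Ω Δ : Set (EuclideanSpace ℝ (Fin J)))
    (hΩ : Ω.Nonempty) (hΔ : Δ.Nonempty) (hΩΔ : Ω ⊆ Δ)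
    (Pr : EuclideanSpace ℝ (Fin J) → ℝ)
    (hPr_uc : ∀ ε > (0 : ℝ), ∃ δ > (0 : ℝ), ∀ x ∈ Ω, ∀ y ∈ Ω,
      ‖x - y‖ ≤ δ → |Pr x - Pr y| ≤ ε)
    (P : EuclideanSpace ℝ (Fin J) → EuclideanSpace ℝ (Fin J))
    (hP_map : ∀ x ∈ Δ, P x ∈ Ω)
    (hP_nonexp : ∀ x ∈ Δ, ∀ y ∈ Δ, ‖P x - P y‖ ≤ ‖x - y‖)
    (ε : ℝ) (hε : 0 ≤ ε)
    (hreach : ∀ x ∈ Ω, ∃ k : ℕ, Pr (P^[k] x) ≤ ε) :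
    ∀ ε' > ε, ∀ (x : ℕ → EuclideanSpace ℝ (Fin J)) (β : ℕ → ℝ)
      (v : ℕ → EuclideanSpace ℝ (Fin J)),
      (∀ k, x k ∈ Ω) → (∀ k, 0 ≤ β k) → Summable β →
      (∃ M : ℝ, ∀ k, ‖v k‖ ≤ M) →
      (∀ k, x k + β k • v k ∈ Δ) →
      (∀ k, x (k + 1) = P (x k + β k • v k)) →
      ∃ K : ℕ, Pr (x K) ≤ ε' :=
  stmt_4_general J Ω Δ hΩΔ Pr hPr_uc P hP_map hP_nonexp ε hreach
end

section
/- Let J be a positive integer, let φ : ℝ^J → ℝ be a convex function, and let x ∈ ℝ^J. Let g ∈ ℝ^J satisfy the property: for 1 ≤ j ≤ J, if the j-th component g_j of g is not zero, then the partial derivative ∂φ/∂x_j(x) of φ at x exists and its value is g_j. Define d ∈ ℝ^J to be the zero vector if ‖g‖ = 0 and to be −g/‖g‖ otherwise. Then ‖d‖ ≤ 1 and there is a δ > 0 such that for all λ ∈ [0, δ], φ(x + λd) ≤ φ(x); that is, d is a nonascending vector for φ at x. -/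
/-!
Split the step `λ d` into its coordinate moves: `x + λ d` is the average of the points
`x + J λ d_j e_j`, so by convexity it lies in the sublevel set `{φ ≤ φ x}` as soon as each of
them does. Along the `j`-th axis, `t ↦ φ (x + t e_j)` has derivative `g_j` at `0`, and `d_j`
has the opposite sign, so a short step in the direction `d_j e_j` does not increase `φ`.
-/

open Filter Set Topology

theorem HasDerivAt.eventually_nhdsGE_le_of_neg {f : ℝ → ℝ} {a x₀ : ℝ} (hf : HasDerivAt f a x₀)
    (ha : a < 0) : ∀ᶠ t in 𝓝[≥] x₀, f t ≤ f x₀ := by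
  rw [← nhdsGT_sup_nhdsWithin_singleton, eventually_sup]
  refine ⟨?_, eventually_nhdsWithin_of_forall fun t ht => by rw [mem_singleton_iff.1 ht]⟩
  have hslope : Tendsto (slope f x₀) (𝓝[>] x₀) (𝓝 a) :=
    (hasDerivAt_iff_tendsto_slope.1 hf).mono_left (nhdsGT_le_nhdsNE x₀)
  filter_upwards [hslope.eventually (eventually_lt_nhds ha), self_mem_nhdsWithin] with t ht hxt
  rw [slope_def_field, div_neg_iff] at ht
  rcases ht with ⟨-, ht⟩ | ⟨ht, -⟩
  · linarith [mem_Ioi.1 hxt]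
  · linarith

theorem HasDerivAt.eventually_nhdsGE_map_add_smul_le_of_mul_neg {E : Type*} [AddCommGroup E]
    [Module ℝ E] {φ : E → ℝ} {x v : E} {a c : ℝ}
    (h : HasDerivAt (fun t : ℝ => φ (x + t • v)) a 0) (hca : c * a < 0) :
    ∀ᶠ t in 𝓝[≥] (0 : ℝ), φ (x + t • c • v) ≤ φ x := by
  have hc : HasDerivAt (fun t : ℝ => t * c) c 0 := hasDerivAt_mul_const c
  have hline : HasDerivAt (fun t : ℝ => φ (x + t • c • v)) (a * c) 0 := by
    simpa only [Function.comp_def, mul_smul] using h.comp_of_eq 0 hc (zero_mul c).symm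
  simpa using hline.eventually_nhdsGE_le_of_neg (by linarith [mul_comm a c])

theorem ConvexOn.map_add_sum_le_of_map_add_card_smul_le {E ι : Type*} [AddCommGroup E]
    [Module ℝ E] [Fintype ι] {φ : E → ℝ} (hφ : ConvexOn ℝ univ φ) (x : E) (u : ι → E)
    (h : ∀ j, φ (x + (Fintype.card ι : ℝ) • u j) ≤ φ x) : φ (x + ∑ j, u j) ≤ φ x := by
  rcases isEmpty_or_nonempty ι with hι | hι
  · simp
  have hn : (Fintype.card ι : ℝ) ≠ 0 := Nat.cast_ne_zero.2 Fintype.card_ne_zero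
  have hmean : x + ∑ j, u j = ∑ j, (Fintype.card ι : ℝ)⁻¹ • (x + (Fintype.card ι : ℝ) • u j) := by
    simp [smul_add, smul_smul, hn, Finset.sum_add_distrib, ← Nat.cast_smul_eq_nsmul ℝ]
  rw [hmean]
  exact ((hφ.convex_le (φ x)).sum_mem (fun _ _ => by positivity) (by simp [hn])
    fun j _ => ⟨mem_univ _, h j⟩).2

theorem EuclideanSpace.sum_smul_single {𝕜 ι : Type*} [RCLike 𝕜] [Fintype ι] [DecidableEq ι]
    (v : EuclideanSpace 𝕜 ι) : ∑ j, v j • EuclideanSpace.single j (1 : 𝕜) = v := by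
  conv_rhs => rw [← (EuclideanSpace.basisFun ι 𝕜).sum_repr v]
  simp

theorem stmt_5_general (J : ℕ)
    (φ : EuclideanSpace ℝ (Fin J) → ℝ) (hφ : ConvexOn ℝ Set.univ φ)
    (x g : EuclideanSpace ℝ (Fin J))
    (hg : ∀ j : Fin J, g j ≠ 0 →
      HasDerivAt (fun t : ℝ => φ (x + t • EuclideanSpace.single j (1 : ℝ))) (g j) 0)
    (d : EuclideanSpace ℝ (Fin J))
    (hd : d = if ‖g‖ = 0 then (0 : EuclideanSpace ℝ (Fin J)) else (-‖g‖⁻¹) • g) :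
    ‖d‖ ≤ 1 ∧ ∃ δ > (0 : ℝ), ∀ lam ∈ Set.Icc (0 : ℝ) δ, φ (x + lam • d) ≤ φ x := by
  by_cases hg0 : ‖g‖ = 0
  · simp only [hd, hg0, if_true]
    exact ⟨by simp, 1, one_pos, fun lam _ => by simp⟩
  rw [if_neg hg0] at hd
  refine ⟨by simp [hd, norm_smul, hg0], ?_⟩
  have hcoord : ∀ j : Fin J, ∀ᶠ lam in 𝓝[≥] (0 : ℝ),
      φ (x + (J : ℝ) • (lam * d j) • EuclideanSpace.single j (1 : ℝ)) ≤ φ x := by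
    intro j
    by_cases hgj : g j = 0
    · exact Eventually.of_forall fun lam => by simp [hd, hgj]
    have hdesc : (J * d j) * g j < 0 := by
      have : 0 < (J : ℝ) * ‖g‖⁻¹ * (g j * g j) := mul_pos
        (mul_pos (Nat.cast_pos.2 j.pos) (inv_pos.2 ((norm_nonneg g).lt_of_ne' hg0)))
        (mul_self_pos.2 hgj)
      rw [hd, PiLp.smul_apply, smul_eq_mul]
      linarith
    filter_upwards [(hg j hgj).eventually_nhdsGE_map_add_smul_le_of_mul_neg hdesc] with lam hlam
    simpa [smul_smul, mul_left_comm, mul_comm] using hlam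
  have hsum (lam : ℝ) : ∑ j, (lam * d j) • EuclideanSpace.single j (1 : ℝ) = lam • d := by
    simp_rw [mul_smul, ← Finset.smul_sum, EuclideanSpace.sum_smul_single]
  obtain ⟨δ, hδ, hsub⟩ := mem_nhdsGE_iff_exists_Icc_subset.1 <|
    (eventually_all.2 hcoord).mono fun lam hlam => hsum lam ▸
      hφ.map_add_sum_le_of_map_add_card_smul_le x _ (by simpa using hlam)
  exact ⟨δ, hδ, hsub⟩

/-- Theorem 2 of the paper: if `φ` is convex and every nonzero component `g_j` of `g`
equals the partial derivative `∂φ/∂x_j(x)`, then `d := −g/‖g‖` (or `0` if `‖g‖ = 0`)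
is a nonascending vector for `φ` at `x`. -/
theorem stmt_5 (J : ℕ) (hJ : 0 < J)
    (φ : EuclideanSpace ℝ (Fin J) → ℝ) (hφ : ConvexOn ℝ Set.univ φ)
    (x g : EuclideanSpace ℝ (Fin J))
    (hg : ∀ j : Fin J, g j ≠ 0 →
      HasDerivAt (fun t : ℝ => φ (x + t • EuclideanSpace.single j (1 : ℝ))) (g j) 0)
    (d : EuclideanSpace ℝ (Fin J))
    (hd : d = if ‖g‖ = 0 then (0 : EuclideanSpace ℝ (Fin J)) else (-‖g‖⁻¹) • g) :
    ‖d‖ ≤ 1 ∧ ∃ δ > (0 : ℝ), ∀ lam ∈ Set.Icc (0 : ℝ) δ, φ (x + lam • d) ≤ φ x :=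
  stmt_5_general J φ hφ x g hg d hd
end
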